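/- Let T be a d-dimensional simplex in ℝ^d whose interior contains exactly one point of ℤ^d, with barycentric coordinates β₀,…,β_d > 0 of that point, and let N ⊂ {0,…,d} with |N| = d. Then vol(T) ≤ 1 / (d! · ∏_{n∈N} β_n). -/

import Mathlib

/-!
Let `m` be the vertex not in `N` and `L t = ∑ i, t i • (p (m.succAbove i) - p m)`. Then `T` is
`p m + L Δ` for the corner simplex `Δ = {t ≥ 0, ∑ t ≤ 1}`, so `vol T = |det L| / d!`.
For `s` in the box `∏ i, (-β (m.succAbove i), β (m.succAbove i))` the point `q + L s` has
barycentric coordinates `β (m.succAbove i) + s i` and `β m - ∑ s`, all positive when `∑ s ≤ 0`;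
so the parallelotope `q + L box` lies in `T ∪ (2q - T)`, and uniqueness of the interior lattice
point `q` leaves `L box` with no lattice point but `0`. Minkowski's theorem then gives
`2 ^ d * |det L| * ∏ n ∈ N, β n = vol (L box) ≤ 2 ^ d`.
-/

open MeasureTheory Set
open scoped Pointwise

def cornerSimplex (d : ℕ) (s : ℝ) : Set (Fin d → ℝ) := {x | (∀ i, 0 ≤ x i) ∧ ∑ i, x i ≤ s}

theorem convex_cornerSimplex (d : ℕ) (s : ℝ) : Convex ℝ (cornerSimplex d s) := by
  rintro x ⟨hx0, hx1⟩ y ⟨hy0, hy1⟩ a b ha hb hab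
  refine ⟨fun i => ?_, ?_⟩
  · exact add_nonneg (mul_nonneg ha (hx0 i)) (mul_nonneg hb (hy0 i))
  · simp only [Pi.add_apply, Pi.smul_apply, smul_eq_mul, Finset.sum_add_distrib, ← Finset.mul_sum]
    have hs : s = a * s + b * s := by rw [← add_mul, hab, one_mul]
    linarith [mul_le_mul_of_nonneg_left hx1 ha, mul_le_mul_of_nonneg_left hy1 hb]

theorem cornerSimplex_eq_empty {d : ℕ} {s : ℝ} (hs : s < 0) : cornerSimplex d s = ∅ :=
  eq_empty_of_forall_notMem fun _ hx =>
    (Finset.sum_nonneg fun i _ => hx.1 i).not_gt (hx.2.trans_lt hs)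

theorem isClosed_setOf_mem_cornerSimplex_sub (d : ℕ) (s : ℝ) :
    IsClosed {z : ℝ × (Fin d → ℝ) | 0 ≤ z.1 ∧ z.2 ∈ cornerSimplex d (s - z.1)} := by
  have : {z : ℝ × (Fin d → ℝ) | 0 ≤ z.1 ∧ z.2 ∈ cornerSimplex d (s - z.1)} =
      {z | 0 ≤ z.1} ∩ (⋂ i, {z | 0 ≤ z.2 i}) ∩ {z | ∑ i, z.2 i ≤ s - z.1} := by
    ext; simp [cornerSimplex, and_assoc]
  rw [this]
  exact ((isClosed_le continuous_const continuous_fst).inter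
    (isClosed_iInter fun i => isClosed_le continuous_const (by fun_prop))).inter
    (isClosed_le (by fun_prop) (by fun_prop))

theorem volume_cornerSimplex (d : ℕ) {s : ℝ} (hs : 0 ≤ s) :
    volume (cornerSimplex d s) = ENNReal.ofReal (s ^ d / d.factorial) := by
  induction d generalizing s with
  | zero => simp [cornerSimplex, hs, volume_pi]
  | succ d ih =>
    set A := {z : ℝ × (Fin d → ℝ) | 0 ≤ z.1 ∧ z.2 ∈ cornerSimplex d (s - z.1)}
    have hA : MeasurableSet A := (isClosed_setOf_mem_cornerSimplex_sub d s).measurableSet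
    have hslice : ∀ t : ℝ, volume (Prod.mk t ⁻¹' A) =
        (Icc 0 s).indicator (fun t => ENNReal.ofReal ((s - t) ^ d / d.factorial)) t := by
      intro t
      by_cases ht : t ∈ Icc 0 s
      · rw [indicator_of_mem ht, ← ih (sub_nonneg.2 ht.2)]
        congr 1
        ext x
        simp [A, ht.1]
      · have hempty : Prod.mk t ⁻¹' A = ∅ := by
          rcases not_and_or.1 ht with ht | ht
          · exact eq_empty_of_forall_notMem fun x hx => ht hx.1
          · simp [A, cornerSimplex_eq_empty (sub_neg.2 (not_le.1 ht))]
        rw [indicator_of_notMem ht, hempty, measure_empty]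
    have hpres := volume_preserving_piFinSuccAbove (fun _ : Fin (d + 1) => ℝ) 0
    calc volume (cornerSimplex (d + 1) s)
        = volume A := by
          rw [← hpres.measure_preimage hA.nullMeasurableSet]
          congr 1
          ext x
          simp [A, cornerSimplex, Fin.forall_fin_succ, Fin.sum_univ_succ, Fin.tail,
            le_sub_iff_add_le', and_assoc]
      _ = ∫⁻ t in Icc 0 s, ENNReal.ofReal ((s - t) ^ d / d.factorial) := by
          rw [Measure.volume_eq_prod, Measure.prod_apply hA]
          simp_rw [hslice]
          exact lintegral_indicator measurableSet_Icc _
      _ = ENNReal.ofReal (s ^ (d + 1) / (d + 1).factorial) := by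
          rw [← ofReal_integral_eq_lintegral_ofReal]
          · rw [integral_Icc_eq_integral_Ioc, ← intervalIntegral.integral_of_le hs,
              intervalIntegral.integral_div, intervalIntegral.integral_comp_sub_left (· ^ d),
              integral_pow, Nat.factorial_succ]
            simp [div_div]
          · exact Continuous.integrableOn_Icc (by fun_prop)
          · exact (ae_restrict_mem measurableSet_Icc).mono fun t ht =>
              div_nonneg (pow_nonneg (sub_nonneg.2 ht.2) _) (Nat.cast_nonneg _)

section Edges

variable {E : Type*} [AddCommGroup E] [Module ℝ E] {d : ℕ}

def edgeMap (p : Fin (d + 1) → E) (m : Fin (d + 1)) : (Fin d → ℝ) →ₗ[ℝ] E :=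
  Fintype.linearCombination ℝ fun i => p (m.succAbove i) - p m

theorem edgeMap_apply (p : Fin (d + 1) → E) (m : Fin (d + 1)) (t : Fin d → ℝ) :
    edgeMap p m t = ∑ i, t i • (p (m.succAbove i) - p m) :=
  Fintype.linearCombination_apply ..

theorem sum_insertNth_smul (p : Fin (d + 1) → E) (m : Fin (d + 1)) (a : ℝ) (t : Fin d → ℝ) :
    ∑ n, (Fin.insertNth m a t : Fin (d + 1) → ℝ) n • p n =
      (a + ∑ i, t i) • p m + edgeMap p m t := by
  simp only [Fin.sum_univ_succAbove _ m, edgeMap_apply, Fin.insertNth_apply_same,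
    Fin.insertNth_apply_succAbove, smul_sub, Finset.sum_sub_distrib, ← Finset.sum_smul, add_smul]
  abel

theorem convexHull_range_eq_vadd_image (p : Fin (d + 1) → E) (m : Fin (d + 1)) :
    convexHull ℝ (range p) = p m +ᵥ edgeMap p m '' cornerSimplex d 1 := by
  apply Subset.antisymm
  · refine convexHull_min ?_ (((convex_cornerSimplex d 1).linear_image _).vadd _)
    rintro - ⟨n, rfl⟩
    obtain rfl | ⟨i, rfl⟩ := Fin.eq_self_or_eq_succAbove m n
    · exact ⟨0, ⟨0, ⟨fun _ => le_rfl, by simp⟩, map_zero _⟩, add_zero _⟩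
    · refine ⟨_, ⟨Pi.single i 1, ⟨fun j => ?_, by simp⟩, rfl⟩, ?_⟩
      · exact (Pi.single_nonneg.2 zero_le_one : (0 : Fin d → ℝ) ≤ Pi.single i 1) j
      · simp [edgeMap]
  · rintro - ⟨-, ⟨t, ⟨ht0, ht1⟩, rfl⟩, rfl⟩
    have key := sum_insertNth_smul p m (1 - ∑ i, t i) t
    rw [sub_add_cancel, one_smul] at key
    change p m + edgeMap p m t ∈ _
    rw [← key]
    refine (convex_convexHull ℝ _).sum_mem (fun n _ => ?_) ?_
      (fun n _ => subset_convexHull ℝ _ (mem_range_self n))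
    · obtain rfl | ⟨i, rfl⟩ := Fin.eq_self_or_eq_succAbove m n
      · simpa using ht1
      · simpa using ht0 i
    · simp [Fin.sum_univ_succAbove _ m]

end Edges

theorem volume_convexHull_range {d : ℕ} (p : Fin (d + 1) → Fin d → ℝ) (m : Fin (d + 1)) :
    volume (convexHull ℝ (range p)) =
      ENNReal.ofReal (|LinearMap.det (edgeMap p m)| / d.factorial) := by
  rw [convexHull_range_eq_vadd_image p m, measure_vadd, Measure.addHaar_image_linearMap,
    volume_cornerSimplex d zero_le_one, ← ENNReal.ofReal_mul (abs_nonneg _), one_pow, mul_one_div]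

theorem sum_smul_mem_interior_convexHull {ι E : Type*} [Fintype ι] [NormedAddCommGroup E]
    [NormedSpace ℝ E] [FiniteDimensional ℝ E] {p : ι → E} (hp : AffineIndependent ℝ p)
    (hcard : Fintype.card ι = Module.finrank ℝ E + 1) {w : ι → ℝ} (hw : ∀ i, 0 < w i)
    (hsum : ∑ i, w i = 1) : ∑ i, w i • p i ∈ interior (convexHull ℝ (range p)) := by
  let b : AffineBasis ι ℝ E := ⟨p, hp, hp.affineSpan_eq_top_iff_card_eq_finrank_add_one.2 hcard⟩
  change _ ∈ interior (convexHull ℝ (range b))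
  rw [b.interior_convexHull]
  intro i
  rw [← Finset.affineCombination_eq_linear_combination _ _ _ hsum]
  exact (hw i).trans_eq (b.coord_apply_combination_of_mem (Finset.mem_univ i) hsum).symm

section Interior

variable {E : Type*} [NormedAddCommGroup E] [NormedSpace ℝ E] [FiniteDimensional ℝ E] {d : ℕ}
  (hE : Module.finrank ℝ E = d) {p : Fin (d + 1) → E} (hp : AffineIndependent ℝ p)
  {β : Fin (d + 1) → ℝ} (hβ : ∀ n, 0 < β n) (hβsum : ∑ n, β n = 1) (m : Fin (d + 1))
include hE hp hβ hβsum

theorem add_edgeMap_mem_interior_of_sum_nonpos {s : Fin d → ℝ}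
    (hs : ∀ i, |s i| < β (m.succAbove i)) (hsum : ∑ i, s i ≤ 0) :
    ∑ n, β n • p n + edgeMap p m s ∈ interior (convexHull ℝ (range p)) := by
  have key := sum_insertNth_smul p m (-∑ i, s i) s
  rw [neg_add_cancel, zero_smul, zero_add] at key
  rw [← key, ← Finset.sum_add_distrib]
  simp_rw [← add_smul]
  refine sum_smul_mem_interior_convexHull hp (by simp [hE]) (fun n => ?_) ?_
  · obtain rfl | ⟨i, rfl⟩ := Fin.eq_self_or_eq_succAbove m n
    · simp only [Fin.insertNth_apply_same]
      linarith [hβ n]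
    · simp only [Fin.insertNth_apply_succAbove]
      linarith [neg_abs_le (s i), hs i]
  · rw [Finset.sum_add_distrib, hβsum, Fin.sum_univ_succAbove _ m]
    simp

theorem add_or_sub_edgeMap_mem_interior {s : Fin d → ℝ} (hs : ∀ i, |s i| < β (m.succAbove i)) :
    ∑ n, β n • p n + edgeMap p m s ∈ interior (convexHull ℝ (range p)) ∨
      ∑ n, β n • p n - edgeMap p m s ∈ interior (convexHull ℝ (range p)) := by
  rcases le_total (∑ i, s i) 0 with h | h
  · exact Or.inl (add_edgeMap_mem_interior_of_sum_nonpos hE hp hβ hβsum m hs h)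
  · right
    rw [sub_eq_add_neg, ← map_neg]
    exact add_edgeMap_mem_interior_of_sum_nonpos hE hp hβ hβsum m (by simpa using hs)
      (by simpa using h)

end Interior

theorem volume_le_two_pow_of_convex_of_symmetric {d : ℕ} {S : Set (Fin d → ℝ)}
    (hsymm : ∀ x ∈ S, -x ∈ S) (hconv : Convex ℝ S)
    (hS : ∀ z : Fin d → ℤ, (fun j => (z j : ℝ)) ∈ S → z = 0) : volume S ≤ 2 ^ d := by
  let L := Submodule.span ℤ (range (Pi.basisFun ℝ (Fin d)))
  have : Countable L.toAddSubgroup := inferInstanceAs (Countable L)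
  by_contra! h
  obtain ⟨⟨x, hxL⟩, hx0, hxS⟩ := exists_ne_zero_mem_lattice_of_measure_mul_two_pow_lt_measure
    (ZSpan.isAddFundamentalDomain' (Pi.basisFun ℝ (Fin d)) volume) hsymm hconv
    (by simpa [ZSpan.fundamentalDomain_pi_basisFun, volume_pi] using h)
  choose z hz using ((Pi.basisFun ℝ (Fin d)).mem_span_iff_repr_mem ℤ x).1 hxL
  obtain rfl : (fun j => (z j : ℝ)) = x := funext hz
  exact hx0 (by ext j; simp [hS z hxS])

theorem volume_image_pi_Ioo_neg {d : ℕ} (L : (Fin d → ℝ) →ₗ[ℝ] Fin d → ℝ) {r : Fin d → ℝ}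
    (hr : ∀ i, 0 ≤ r i) :
    volume (L '' univ.pi fun i => Ioo (-r i) (r i)) =
      ENNReal.ofReal (2 ^ d * (|LinearMap.det L| * ∏ i, r i)) := by
  rw [Measure.addHaar_image_linearMap, volume_pi_pi]
  simp_rw [Real.volume_Ioo, sub_neg_eq_add, ← two_mul]
  rw [← ENNReal.ofReal_prod_of_nonneg fun i _ => by linarith [hr i],
    ← ENNReal.ofReal_mul (abs_nonneg _), Finset.prod_mul_distrib, Finset.prod_const,
    Finset.card_univ, Fintype.card_fin]
  ring_nf

theorem abs_det_mul_prod_le_one_of_int_mem_eq_zero {d : ℕ} (L : (Fin d → ℝ) →ₗ[ℝ] Fin d → ℝ)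
    {r : Fin d → ℝ} (hr : ∀ i, 0 ≤ r i)
    (hL : ∀ z : Fin d → ℤ, (fun j => (z j : ℝ)) ∈ L '' univ.pi (fun i => Ioo (-r i) (r i)) →
      z = 0) :
    |LinearMap.det L| * ∏ i, r i ≤ 1 := by
  have hsymm : ∀ x ∈ L '' univ.pi (fun i => Ioo (-r i) (r i)),
      -x ∈ L '' univ.pi (fun i => Ioo (-r i) (r i)) := by
    rintro - ⟨s, hs, rfl⟩
    exact ⟨-s, fun i _ => by simpa [and_comm, neg_lt] using hs i (mem_univ i), map_neg L s⟩
  have hvol := volume_le_two_pow_of_convex_of_symmetric hsymm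
    ((convex_pi fun _ _ => convex_Ioo _ _).linear_image L) hL
  rw [volume_image_pi_Ioo_neg L hr, ← ENNReal.ofReal_ofNat 2, ← ENNReal.ofReal_pow zero_le_two,
    ENNReal.ofReal_le_ofReal_iff (by positivity)] at hvol
  exact le_of_mul_le_mul_left (hvol.trans_eq (mul_one _).symm) (by positivity)

theorem stmt11_general (d : ℕ) (p : Fin (d + 1) → Fin d → ℝ) (hp : AffineIndependent ℝ p)
    (T : Set (Fin d → ℝ)) (hT : T = convexHull ℝ (Set.range p))
    (q : Fin d → ℤ)
    (huniq : ∀ q' : Fin d → ℤ, (fun j => ((q' j : ℤ) : ℝ)) ∈ interior T → q' = q)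
    (β : Fin (d + 1) → ℝ) (hβpos : ∀ i, 0 < β i) (hβsum : ∑ i, β i = 1)
    (hbar : (∑ i, β i • p i) = fun j => ((q j : ℤ) : ℝ))
    (N : Finset (Fin (d + 1))) (hN : N.card = d) :
    MeasureTheory.volume T ≤
      ENNReal.ofReal (1 / ((d.factorial : ℝ) * ∏ n ∈ N, β n)) := by
  subst hT
  obtain ⟨m, hm⟩ : ∃ m, Nᶜ = {m} := Finset.card_eq_one.1 (by simp [Finset.card_compl, hN])
  have hprod : ∏ n ∈ N, β n = ∏ i, β (m.succAbove i) := by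
    rw [← compl_compl N, hm, ← Fin.image_succAbove_univ,
      Finset.prod_image fun i _ j _ h => Fin.succAbove_right_injective h]
  have hdet : |LinearMap.det (edgeMap p m)| * ∏ i, β (m.succAbove i) ≤ 1 := by
    refine abs_det_mul_prod_le_one_of_int_mem_eq_zero _ (fun i => (hβpos _).le) ?_
    rintro z ⟨s, hs, hsz⟩
    rcases add_or_sub_edgeMap_mem_interior (Module.finrank_fin_fun ℝ) hp hβpos hβsum m
      fun i => abs_lt.2 (hs i (mem_univ i)) with h | h
    · simpa using huniq (q + z) (by convert h using 1; ext j; simp [hbar, hsz])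
    · simpa using huniq (q - z) (by convert h using 1; ext j; simp [hbar, hsz])
  have hprodpos : 0 < ∏ i, β (m.succAbove i) := Finset.prod_pos fun i _ => hβpos _
  have hfact : (0 : ℝ) < d.factorial := Nat.cast_pos.2 d.factorial_pos
  rw [volume_convexHull_range p m, hprod]
  refine ENNReal.ofReal_le_ofReal ?_
  rw [div_le_div_iff₀ hfact (by positivity)]
  nlinarith

/-- Lemma 2 (Pikhurko): a `d`-simplex in `ℝ^d` with exactly one interior lattice point,
whose barycentric coordinates are `β₀,…,β_d`, satisfies
`vol(T) ≤ 1/(d! ∏_{n∈N} β_n)` for every `d`-element subset `N` of `{0,…,d}`. -/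
theorem stmt11 (d : ℕ) (p : Fin (d + 1) → Fin d → ℝ) (hp : AffineIndependent ℝ p)
    (T : Set (Fin d → ℝ)) (hT : T = convexHull ℝ (Set.range p))
    (q : Fin d → ℤ) (hq : (fun j => ((q j : ℤ) : ℝ)) ∈ interior T)
    (huniq : ∀ q' : Fin d → ℤ, (fun j => ((q' j : ℤ) : ℝ)) ∈ interior T → q' = q)
    (β : Fin (d + 1) → ℝ) (hβpos : ∀ i, 0 < β i) (hβsum : ∑ i, β i = 1)
    (hbar : (∑ i, β i • p i) = fun j => ((q j : ℤ) : ℝ))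
    (N : Finset (Fin (d + 1))) (hN : N.card = d) :
    MeasureTheory.volume T ≤
      ENNReal.ofReal (1 / ((d.factorial : ℝ) * ∏ n ∈ N, β n)) :=
  stmt11_general d p hp T hT q huniq β hβpos hβsum hbar N hN
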